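/- arXiv:1705.10870 — 5 statements merged into one kernel-verified Lean document; each statement's English description precedes it below -/
import Mathlib

section
/- (Law of inertia.) Let α : ℝ³ × ℝ³ × ℝ → ℝ³ be a putative law of motion for an isolated body, assigning an acceleration α(x, v, t) to relative position x, relative velocity v and time t. Suppose α is invariant under time translations (α(x, v, t + s) = α(x, v, t) for all s), invariant under translations of position (α(x + a, v, t) = α(x, v, t) for all a ∈ ℝ³), invariant under velocity boosts (α(x, v + w, t) = α(x, v, t) for all w ∈ ℝ³), and equivariant under rotations (α(R x, R v, t) = R (α(x, v, t)) for every R ∈ SO(3)). Then α is identically zero; i.e., isolated bodies move with constant relative velocity. -/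
set_option maxRecDepth 8000

noncomputable def flipR (s : Fin 3 → Bool) :
    EuclideanSpace ℝ (Fin 3) ≃ₗᵢ[ℝ] EuclideanSpace ℝ (Fin 3) :=
  LinearIsometryEquiv.piLpCongrRight 2
    (fun i => if s i then LinearIsometryEquiv.neg ℝ else LinearIsometryEquiv.refl ℝ ℝ)

lemma flipR_apply (s : Fin 3 → Bool) (x : EuclideanSpace ℝ (Fin 3)) (i : Fin 3) :
    flipR s x i = if s i then -(x i) else x i := by
  simp only [flipR, LinearIsometryEquiv.piLpCongrRight_apply, PiLp.toLp_apply]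
  split <;> simp_all

lemma flipR_toMatrix (s : Fin 3 → Bool) (i j : Fin 3) :
    LinearMap.toMatrix (EuclideanSpace.basisFun (Fin 3) ℝ).toBasis
      (EuclideanSpace.basisFun (Fin 3) ℝ).toBasis
      ((flipR s).toLinearEquiv : EuclideanSpace ℝ (Fin 3) →ₗ[ℝ] EuclideanSpace ℝ (Fin 3)) i j
      = if i = j then (if s i then -1 else 1) else 0 := by
  rw [LinearMap.toMatrix_apply]
  simp only [OrthonormalBasis.coe_toBasis, EuclideanSpace.basisFun_apply,
    OrthonormalBasis.coe_toBasis_repr_apply, EuclideanSpace.basisFun_repr,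
    LinearEquiv.coe_coe, LinearIsometryEquiv.coe_toLinearEquiv]
  rw [flipR_apply, EuclideanSpace.single_apply]
  by_cases hij : i = j <;> by_cases hs : s i <;> simp [hij, hs]

lemma flipR_det (s : Fin 3 → Bool) :
    LinearMap.det ((flipR s).toLinearEquiv :
        EuclideanSpace ℝ (Fin 3) →ₗ[ℝ] EuclideanSpace ℝ (Fin 3))
      = (if s 0 then -1 else 1) * ((if s 1 then -1 else 1) * (if s 2 then -1 else 1)) := by
  rw [← LinearMap.det_toMatrix (EuclideanSpace.basisFun (Fin 3) ℝ).toBasis]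
  rw [Matrix.det_fin_three]
  rw [flipR_toMatrix, flipR_toMatrix, flipR_toMatrix, flipR_toMatrix, flipR_toMatrix,
    flipR_toMatrix, flipR_toMatrix, flipR_toMatrix, flipR_toMatrix]
  by_cases h0 : s 0 <;> by_cases h1 : s 1 <;> by_cases h2 : s 2 <;>
    simp [h0, h1, h2, show (2:Fin 3) ≠ 1 by decide, show (2:Fin 3) ≠ 0 by decide,
      show (1:Fin 3) ≠ 2 by decide, show (0:Fin 3) ≠ 2 by decide]

/-- The law of inertia: a law of motion `α` for an isolated body that is invariant
under time translations, translations of position, velocity boosts, and equivariant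
under rotations (elements of SO(3)) must vanish identically; isolated bodies move
with constant relative velocity. -/
theorem law_of_inertia
    (α : EuclideanSpace ℝ (Fin 3) → EuclideanSpace ℝ (Fin 3) → ℝ →
      EuclideanSpace ℝ (Fin 3))
    (htime : ∀ x v t s, α x v (t + s) = α x v t)
    (htrans : ∀ x v t (a : EuclideanSpace ℝ (Fin 3)), α (x + a) v t = α x v t)
    (hboost : ∀ x v t (w : EuclideanSpace ℝ (Fin 3)), α x (v + w) t = α x v t)
    (hrot : ∀ R : EuclideanSpace ℝ (Fin 3) ≃ₗᵢ[ℝ] EuclideanSpace ℝ (Fin 3),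
      LinearMap.det (R.toLinearEquiv :
        EuclideanSpace ℝ (Fin 3) →ₗ[ℝ] EuclideanSpace ℝ (Fin 3)) = 1 →
      ∀ x v t, α (R x) (R v) t = R (α x v t)) :
    ∀ x v t, α x v t = 0 := by
  -- α is constant, equal to c := α 0 0 0
  have hconst : ∀ x v t, α x v t = α 0 0 0 := by
    intro x v t
    calc α x v t = α (0 + x) (0 + v) (0 + t) := by rw [zero_add, zero_add, zero_add]
    _ = α (0 + x) (0 + v) 0 := htime _ _ 0 t
    _ = α 0 (0 + v) 0 := htrans _ _ _ x
    _ = α 0 0 0 := hboost _ _ _ v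
  set c := α 0 0 0 with hc
  -- c is fixed by every rotation
  have hfix : ∀ s : Fin 3 → Bool,
      (if s 0 then (-1:ℝ) else 1) * ((if s 1 then -1 else 1) * (if s 2 then -1 else 1)) = 1 →
      flipR s c = c := by
    intro s hs
    have := hrot (flipR s) (by rw [flipR_det]; exact hs) 0 0 0
    rw [map_zero, hconst] at this
    exact this.symm
  have h1 := hfix (fun i => i ≠ 0) (by norm_num [show ¬(2:Fin 3)=0 by decide, show ¬(1:Fin 3)=0 by decide])
  have h2 := hfix (fun i => i ≠ 2) (by norm_num [show ¬(0:Fin 3)=2 by decide, show ¬(1:Fin 3)=2 by decide])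
  have hz : c = 0 := by
    ext i
    fin_cases i
    · have := congrFun (congrArg (fun (y : EuclideanSpace ℝ (Fin 3)) => (y : Fin 3 → ℝ)) h2) 0
      simp only [flipR_apply] at this
      norm_num at this
      have h' : -c 0 = c 0 := by
        first | exact this | exact this (by decide)
      show c 0 = 0
      linarith
    · have := congrFun (congrArg (fun (y : EuclideanSpace ℝ (Fin 3)) => (y : Fin 3 → ℝ)) h1) 1
      simp only [flipR_apply] at this
      norm_num at this
      have h' : -c 1 = c 1 := by
        first | exact this | exact this (by decide)
      show c 1 = 0
      linarith
    · have := congrFun (congrArg (fun (y : EuclideanSpace ℝ (Fin 3)) => (y : Fin 3 → ℝ)) h1) 2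
      simp only [flipR_apply] at this
      norm_num at this
      have h' : -c 2 = c 2 := by
        first | exact this | exact this (by decide)
      show c 2 = 0
      linarith
  intro x v t
  rw [hconst, hz]
end

section
/- (Internal torque.) Let x, v ∈ ℝ³, let m_A, m_B > 0 with m_A ≠ m_B, and let f = φ_e•x + φ_s•v + φ_⊥•(x × v), k = −φ_e•x − φ_s•v + φ_⊥•(x × v) for real scalars φ_e, φ_s, φ_⊥. Then x × ((m_A m_B/(m_A + m_B))•((1/m_A)•f − (1/m_B)•k)) = φ_s•(x × v) + ((m_B − m_A)/(m_A + m_B)) φ_⊥ • (x × (x × v)). Moreover, if x and v are linearly independent, this vector vanishes if and only if φ_s = 0 and φ_⊥ = 0. -/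
/-- Internal torque: for forces satisfying the Generalised Principle of Action and
Reaction, the internal torque equals
`φ_s•(x × v) + ((m_B − m_A)/(m_A + m_B)) φ_⊥ • (x × (x × v))`; if moreover `x` and
`v` are linearly independent, it vanishes iff `φ_s = 0` and `φ_⊥ = 0`. -/
theorem internal_torque (x v : Fin 3 → ℝ) (mA mB : ℝ)
    (hmA : 0 < mA) (hmB : 0 < mB) (hne : mA ≠ mB)
    (φe φs φp : ℝ) (f k : Fin 3 → ℝ)
    (hf : f = φe • x + φs • v + φp • crossProduct x v)
    (hk : k = -φe • x - φs • v + φp • crossProduct x v) :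
    crossProduct x ((mA * mB / (mA + mB)) • ((1 / mA) • f - (1 / mB) • k)) =
      φs • crossProduct x v +
        (((mB - mA) / (mA + mB)) * φp) • crossProduct x (crossProduct x v) ∧
    (LinearIndependent ℝ ![x, v] →
      (crossProduct x ((mA * mB / (mA + mB)) • ((1 / mA) • f - (1 / mB) • k)) = 0 ↔
        φs = 0 ∧ φp = 0)) := by
  have hA : mA ≠ 0 := hmA.ne'
  have hB : mB ≠ 0 := hmB.ne'
  have hAB : mA + mB ≠ 0 := by positivity
  set w := crossProduct x v with hw
  have h1 : (mA * mB / (mA + mB)) • ((1 / mA) • f - (1 / mB) • k)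
      = φe • x + φs • v + (((mB - mA) / (mA + mB)) * φp) • w := by
    subst hf hk
    funext i
    simp only [Pi.smul_apply, Pi.add_apply, Pi.sub_apply, Pi.neg_apply, smul_eq_mul,
      Pi.mul_apply]
    field_simp
    ring
  have key : crossProduct x ((mA * mB / (mA + mB)) • ((1 / mA) • f - (1 / mB) • k)) =
      φs • w + (((mB - mA) / (mA + mB)) * φp) • crossProduct x w := by
    rw [h1, map_add, map_add, map_smul, map_smul, map_smul, cross_self, smul_zero, zero_add]
  refine ⟨key, fun hli => ?_⟩
  rw [key]
  constructor
  · intro h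
    have hwne : w ≠ 0 := crossProduct_ne_zero_iff_linearIndependent.mpr hli
    have hxne : x ≠ 0 := by
      intro hx
      apply hwne
      rw [hw, hx]
      simp
    have hs : φs = 0 := by
      have hd := congrArg (fun y => dotProduct w y) h
      simp only [dotProduct_add, dotProduct_smul, dot_cross_self, smul_eq_mul,
        mul_zero, add_zero, dotProduct_zero] at hd
      have hww : dotProduct w w ≠ 0 :=
        fun h0 => hwne (dotProduct_self_eq_zero.mp h0)
      exact (mul_eq_zero.mp hd).resolve_right hww
    refine ⟨hs, ?_⟩
    rw [hs, zero_smul, zero_add] at h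
    have huz : crossProduct x w ≠ 0 := by
      intro h0
      have hcc := cross_dot_cross x w x w
      rw [h0] at hcc
      simp only [dotProduct_zero, zero_dotProduct] at hcc
      have hx2 : dotProduct x x ≠ 0 :=
        fun h0 => hxne (dotProduct_self_eq_zero.mp h0)
      have hw2 : dotProduct w w ≠ 0 :=
        fun h0 => hwne (dotProduct_self_eq_zero.mp h0)
      have hxw : dotProduct x w = 0 := dot_self_cross x v
      rw [hxw] at hcc
      have hprod : dotProduct x x * dotProduct w w = 0 := by linarith [hcc]
      exact (mul_eq_zero.mp hprod).elim hx2 hw2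
    have hc := (smul_eq_zero.mp h).resolve_right huz
    have hcoef : (mB - mA) / (mA + mB) ≠ 0 := div_ne_zero (sub_ne_zero.mpr (Ne.symm hne)) hAB
    exact (mul_eq_zero.mp hc).resolve_left hcoef
  · rintro ⟨hs, hp⟩
    simp [hs, hp]
end

section
/- (Closure of velocity addition.) Let C > 0 and let G : ℝ → ℝ be continuous and strictly increasing on [0, C) with G(0) = 1 and G(r) → ∞ as r → C from the left, and set Φ(W) = G(‖W‖)•W. For any U, V ∈ ℝ³ with ‖U‖ < C and ‖V‖ < C, there exists a unique W ∈ ℝ³ with ‖W‖ < C such that Φ(W) = Φ(U) + Φ(V). In particular the velocity addition U ⊕ V is well defined and satisfies ‖U ⊕ V‖ < C. -/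
/-- Closure of velocity addition: with `Φ(W) = G(‖W‖)•W`, for any `U, V ∈ ℝ³` with
`‖U‖ < C` and `‖V‖ < C` there exists a unique `W` with `‖W‖ < C` such that
`Φ(W) = Φ(U) + Φ(V)`; hence `U ⊕ V` is well defined and `‖U ⊕ V‖ < C`. -/
theorem velocity_addition_existsUnique (C : ℝ) (hC : 0 < C) (G : ℝ → ℝ)
    (hGcont : ContinuousOn G (Set.Ico 0 C))
    (hGmono : StrictMonoOn G (Set.Ico 0 C))
    (hG0 : G 0 = 1)
    (hGtop : Filter.Tendsto G (nhdsWithin C (Set.Iio C)) Filter.atTop)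
    (U V : EuclideanSpace ℝ (Fin 3)) (hU : ‖U‖ < C) (hV : ‖V‖ < C) :
    ∃! W : EuclideanSpace ℝ (Fin 3),
      ‖W‖ < C ∧ G ‖W‖ • W = G ‖U‖ • U + G ‖V‖ • V := by
  set T : EuclideanSpace ℝ (Fin 3) := G ‖U‖ • U + G ‖V‖ • V with hT
  set S : ℝ := ‖T‖ with hS
  have hS0 : 0 ≤ S := norm_nonneg _
  -- positivity of G on [0,C)
  have hGpos : ∀ r ∈ Set.Ico (0:ℝ) C, 0 < G r := by
    intro r hr
    have h1 : (1:ℝ) ≤ G r := by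
      rcases eq_or_lt_of_le hr.1 with h | h
      · rw [← h, hG0]
      · exact le_of_lt (hG0 ▸ hGmono ⟨le_refl 0, hC⟩ hr h)
    linarith
  -- f = r ↦ G r * r strict mono on [0,C)
  set f : ℝ → ℝ := fun r => G r * r with hf
  have hfmono : StrictMonoOn f (Set.Ico 0 C) := by
    intro a ha b hb hab
    have hGb : 0 < G b := hGpos b hb
    calc G a * a ≤ G b * a :=
          mul_le_mul_of_nonneg_right (le_of_lt (hGmono ha hb hab)) ha.1
      _ < G b * b := mul_lt_mul_of_pos_left hab hGb
  have hfcont : ContinuousOn f (Set.Ico 0 C) := hGcont.mul continuousOn_id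
  -- f tends to atTop at C from the left
  have hftop : Filter.Tendsto f (nhdsWithin C (Set.Iio C)) Filter.atTop :=
    hGtop.atTop_mul_pos hC (Filter.tendsto_id.mono_left nhdsWithin_le_nhds)
  -- find r₀ ∈ (0, C) with f r₀ ≥ S
  have hne : (nhdsWithin C (Set.Iio C)).NeBot := by infer_instance
  have hev : ∀ᶠ x in nhdsWithin C (Set.Iio C),
      S ≤ f x ∧ x ∈ Set.Iio C ∧ 0 < x := by
    refine (hftop.eventually_ge_atTop S).and (eventually_mem_nhdsWithin.and ?_)
    exact eventually_nhdsWithin_of_eventually_nhds (eventually_gt_nhds hC)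
  obtain ⟨r₀, hr₀S, hr₀C, hr₀0⟩ := hev.exists
  -- IVT on [0, r₀]
  have hsub : Set.Icc (0:ℝ) r₀ ⊆ Set.Ico 0 C := fun x hx =>
    ⟨hx.1, lt_of_le_of_lt hx.2 hr₀C⟩
  have hf0 : f 0 = 0 := by simp [hf]
  have hmem : S ∈ Set.Icc (f 0) (f r₀) := by rw [hf0]; exact ⟨hS0, hr₀S⟩
  obtain ⟨r, hrIcc, hfr⟩ := intermediate_value_Icc (le_of_lt hr₀0)
    (hfcont.mono hsub) hmem
  have hrIco : r ∈ Set.Ico (0:ℝ) C := hsub hrIcc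
  have hGr : 0 < G r := hGpos r hrIco
  -- define W
  refine ⟨(G r)⁻¹ • T, ?_, ?_⟩
  · have hnW : ‖(G r)⁻¹ • T‖ = r := by
      rw [norm_smul, Real.norm_eq_abs, abs_of_pos (inv_pos.mpr hGr), ← hS]
      field_simp
      rw [← hfr]
    constructor
    · rw [hnW]; exact hrIco.2
    · rw [hnW, smul_smul, mul_inv_cancel₀ (ne_of_gt hGr), one_smul]
  · rintro W' ⟨hW'C, hW'eq⟩
    have hW'0 : (0:ℝ) ≤ ‖W'‖ := norm_nonneg _
    have hW'Ico : ‖W'‖ ∈ Set.Ico (0:ℝ) C := ⟨hW'0, hW'C⟩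
    have hfW' : f ‖W'‖ = S := by
      have := congrArg norm hW'eq
      rwa [norm_smul, Real.norm_eq_abs, abs_of_pos (hGpos _ hW'Ico)] at this
    have hreq : ‖W'‖ = r := hfmono.injOn hW'Ico hrIco (hfr ▸ hfW')
    rw [hreq] at hW'eq
    rw [← hW'eq, smul_smul, inv_mul_cancel₀ (ne_of_gt hGr), one_smul]
end

section
/- (Associativity of velocity addition; nonlinear presentation of Galileo's group.) With C, G, Φ and ⊕ as specified, for all U, V, W ∈ ℝ³ with ‖U‖ < C, ‖V‖ < C and ‖W‖ < C one has (W ⊕ V) ⊕ U = W ⊕ (V ⊕ U). Consequently the open ball {z ∈ ℝ³ : ‖z‖ < C} equipped with ⊕ is a commutative group. -/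
section Aux
variable {C : ℝ} {G : ℝ → ℝ}

lemma velAux_Gpos (hGmono : StrictMonoOn G (Set.Ico 0 C)) (hG0 : G 0 = 1)
    {r : ℝ} (h0 : 0 ≤ r) (hr : r < C) : 0 < G r := by
  have h0C : (0:ℝ) ∈ Set.Ico 0 C := ⟨le_refl 0, lt_of_le_of_lt h0 hr⟩
  have := hGmono.monotoneOn h0C ⟨h0, hr⟩ h0
  linarith

lemma velAux_fmono (hGmono : StrictMonoOn G (Set.Ico 0 C)) (hG0 : G 0 = 1) :
    StrictMonoOn (fun r => G r * r) (Set.Ico 0 C) := by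
  intro a ha b hb hab
  have hGa : G a ≤ G b := (hGmono ha hb hab).le
  have hGb : 0 < G b := velAux_Gpos hGmono hG0 hb.1 hb.2
  calc G a * a ≤ G b * a := mul_le_mul_of_nonneg_right hGa ha.1
    _ < G b * b := by exact (mul_lt_mul_iff_right₀ hGb).2 hab

lemma velAux_unique (hGmono : StrictMonoOn G (Set.Ico 0 C)) (hG0 : G 0 = 1)
    {W₁ W₂ : EuclideanSpace ℝ (Fin 3)} (h1 : ‖W₁‖ < C) (h2 : ‖W₂‖ < C)
    (h : G ‖W₁‖ • W₁ = G ‖W₂‖ • W₂) : W₁ = W₂ := by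
  have hn : G ‖W₁‖ * ‖W₁‖ = G ‖W₂‖ * ‖W₂‖ := by
    have := congrArg norm h
    rwa [norm_smul, norm_smul, Real.norm_eq_abs, Real.norm_eq_abs,
      abs_of_pos (velAux_Gpos hGmono hG0 (norm_nonneg _) h1),
      abs_of_pos (velAux_Gpos hGmono hG0 (norm_nonneg _) h2)] at this
  have hne : ‖W₁‖ = ‖W₂‖ :=
    (velAux_fmono hGmono hG0).injOn ⟨norm_nonneg _, h1⟩ ⟨norm_nonneg _, h2⟩ hn
  rw [hne] at h
  exact smul_right_injective _ (ne_of_gt (velAux_Gpos hGmono hG0 (norm_nonneg _) h2)) h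

lemma velAux_exists (hC : 0 < C) (hGcont : ContinuousOn G (Set.Ico 0 C))
    (hGmono : StrictMonoOn G (Set.Ico 0 C)) (hG0 : G 0 = 1)
    (hGtop : Filter.Tendsto G (nhdsWithin C (Set.Iio C)) Filter.atTop)
    (X : EuclideanSpace ℝ (Fin 3)) : ∃ W, ‖W‖ < C ∧ G ‖W‖ • W = X := by
  set y : ℝ := ‖X‖ with hy
  -- f tends to atTop near C from the left
  have hfid : Filter.Tendsto (fun r : ℝ => r) (nhdsWithin C (Set.Iio C)) (nhds C) :=
    Filter.tendsto_id.mono_left nhdsWithin_le_nhds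
  have hftop : Filter.Tendsto (fun r => G r * r) (nhdsWithin C (Set.Iio C)) Filter.atTop :=
    Filter.Tendsto.atTop_mul_pos hC hGtop hfid
  have hEv : ∀ᶠ r in nhdsWithin C (Set.Iio C), y < G r * r ∧ r ∈ Set.Ioo 0 C := by
    filter_upwards [hftop.eventually_gt_atTop y,
      self_mem_nhdsWithin,
      eventually_nhdsWithin_of_eventually_nhds (eventually_gt_nhds hC)] with r h1 h2 h3
    exact ⟨h1, h3, h2⟩
  haveI : (nhdsWithin C (Set.Iio C)).NeBot := nhdsLT_neBot C
  obtain ⟨r', hr'⟩ := hEv.exists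
  obtain ⟨hyr', hr'0, hr'C⟩ := hr'
  -- IVT on [0, r']
  have hsub : Set.Icc (0:ℝ) r' ⊆ Set.Ico 0 C := fun x hx => ⟨hx.1, lt_of_le_of_lt hx.2 hr'C⟩
  have hcont : ContinuousOn (fun r => G r * r) (Set.Icc 0 r') :=
    (hGcont.mono hsub).mul continuousOn_id
  have hIVT := intermediate_value_Icc (le_of_lt hr'0) hcont
  have hymem : y ∈ Set.Icc (G 0 * 0) (G r' * r') := by
    constructor
    · simp only [mul_zero]; exact norm_nonneg X
    · exact le_of_lt hyr'
  obtain ⟨r, hrmem, hr⟩ := hIVT hymem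
  have hr' : G r * r = y := hr
  have hrC : r < C := lt_of_le_of_lt hrmem.2 hr'C
  have hGr : 0 < G r := velAux_Gpos hGmono hG0 hrmem.1 hrC
  refine ⟨(G r)⁻¹ • X, ?_, ?_⟩
  · have hnorm : ‖(G r)⁻¹ • X‖ = r := by
      rw [norm_smul, Real.norm_eq_abs, abs_of_pos (inv_pos.2 hGr), ← hy, ← hr',
        inv_mul_cancel_left₀ (ne_of_gt hGr)]
    rw [hnorm]; exact hrC
  · have hnorm : ‖(G r)⁻¹ • X‖ = r := by
      rw [norm_smul, Real.norm_eq_abs, abs_of_pos (inv_pos.2 hGr), ← hy, ← hr',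
        inv_mul_cancel_left₀ (ne_of_gt hGr)]
    rw [hnorm, smul_smul, mul_inv_cancel₀ (ne_of_gt hGr), one_smul]

end Aux


/-- The velocity addition `U ⊕ V`: the unique `W` with `‖W‖ < C` such that
`G(‖W‖)•W = G(‖U‖)•U + G(‖V‖)•V` (chosen via `Classical.epsilon`, which returns a
witness of the defining property whenever one exists). -/
noncomputable def velAdd (C : ℝ) (G : ℝ → ℝ)
    (U V : EuclideanSpace ℝ (Fin 3)) : EuclideanSpace ℝ (Fin 3) :=
  Classical.epsilon fun W : EuclideanSpace ℝ (Fin 3) =>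
    ‖W‖ < C ∧ G ‖W‖ • W = G ‖U‖ • U + G ‖V‖ • V

/-- Associativity of velocity addition (nonlinear presentation of Galileo's group):
`(W ⊕ V) ⊕ U = W ⊕ (V ⊕ U)` for all `U, V, W` of norm less than `C`; consequently
the open ball `{z ∈ ℝ³ : ‖z‖ < C}` equipped with `⊕` is a commutative group. -/
theorem velAdd_assoc_commGroup (C : ℝ) (hC : 0 < C) (G : ℝ → ℝ)
    (hGcont : ContinuousOn G (Set.Ico 0 C))
    (hGmono : StrictMonoOn G (Set.Ico 0 C))
    (hG0 : G 0 = 1)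
    (hGtop : Filter.Tendsto G (nhdsWithin C (Set.Iio C)) Filter.atTop) :
    (∀ U V W : EuclideanSpace ℝ (Fin 3), ‖U‖ < C → ‖V‖ < C → ‖W‖ < C →
      velAdd C G (velAdd C G W V) U = velAdd C G W (velAdd C G V U)) ∧
    ∃ g : CommGroup {z : EuclideanSpace ℝ (Fin 3) // ‖z‖ < C},
      ∀ a b : {z : EuclideanSpace ℝ (Fin 3) // ‖z‖ < C},
        (g.toGroup.toDivInvMonoid.toMonoid.toSemigroup.toMul.mul a b).val =
          velAdd C G a.val b.val := by
  set Φ : EuclideanSpace ℝ (Fin 3) → EuclideanSpace ℝ (Fin 3) := fun W => G ‖W‖ • W with hΦ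
  have spec : ∀ U V : EuclideanSpace ℝ (Fin 3),
      ‖velAdd C G U V‖ < C ∧ Φ (velAdd C G U V) = Φ U + Φ V := by
    intro U V
    exact Classical.epsilon_spec
      (velAux_exists hC hGcont hGmono hG0 hGtop (G ‖U‖ • U + G ‖V‖ • V))
  -- characterization of velAdd
  have char : ∀ (U V Z : EuclideanSpace ℝ (Fin 3)), ‖Z‖ < C → Φ Z = Φ U + Φ V →
      velAdd C G U V = Z := by
    intro U V Z hZ hZeq
    exact velAux_unique hGmono hG0 (spec U V).1 hZ (by show Φ (velAdd C G U V) = Φ Z; rw [(spec U V).2, hZeq])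
  have hΦ0 : Φ 0 = 0 := by simp [hΦ]
  have hΦneg : ∀ W : EuclideanSpace ℝ (Fin 3), Φ (-W) = -Φ W := by
    intro W; simp [hΦ, norm_neg]
  have assoc : ∀ U V W : EuclideanSpace ℝ (Fin 3), ‖U‖ < C → ‖V‖ < C → ‖W‖ < C →
      velAdd C G (velAdd C G W V) U = velAdd C G W (velAdd C G V U) := by
    intro U V W _ _ _
    apply char
    · exact (spec W (velAdd C G V U)).1
    · rw [(spec W (velAdd C G V U)).2, (spec W V).2, (spec V U).2, add_assoc]
  refine ⟨assoc, ?_⟩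
  have h0 : ‖(0 : EuclideanSpace ℝ (Fin 3))‖ < C := by simpa using hC
  refine ⟨{
    mul := fun a b => ⟨velAdd C G a.1 b.1, (spec a.1 b.1).1⟩
    one := ⟨0, h0⟩
    inv := fun a => ⟨-a.1, by simpa using a.2⟩
    mul_assoc := fun a b c => Subtype.ext (assoc c.1 b.1 a.1 c.2 b.2 a.2)
    one_mul := fun a => Subtype.ext (char 0 a.1 a.1 a.2 (by rw [hΦ0, zero_add]))
    mul_one := fun a => Subtype.ext (char a.1 0 a.1 a.2 (by rw [hΦ0, add_zero]))
    inv_mul_cancel := fun a => Subtype.ext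
      (char (-a.1) a.1 0 h0 (by rw [hΦ0, hΦneg, neg_add_cancel]))
    mul_comm := fun a b => Subtype.ext
      (char a.1 b.1 (velAdd C G b.1 a.1) (spec b.1 a.1).1 (by rw [(spec b.1 a.1).2, add_comm]))
  }, fun a b => rfl⟩
end

section
/- (Invariance of distances implies invariance of proper time.) With C, G and Φ as specified, let V₁, V₂, V₃ ∈ ℝ³ with norms less than C satisfy Φ(V₁) = Φ(V₂) + Φ(V₃) (i.e. V₁ = V₂ ⊕ V₃), suppose V₂ and V₃ are linearly independent, and let Δt₁, Δt₂, Δt₃ be positive reals. If the traversed displacements satisfy Δt₁•V₁ = Δt₂•V₂ + Δt₃•V₃ (distances in space are invariant), then the proper times coincide: Δt₁/G(‖V₁‖) = Δt₂/G(‖V₂‖) = Δt₃/G(‖V₃‖). -/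
/-- Invariance of distances implies invariance of proper time: if
`Φ(V₁) = Φ(V₂) + Φ(V₃)` (i.e. `V₁ = V₂ ⊕ V₃`, where `Φ(W) = G(‖W‖)•W`), `V₂` and
`V₃` are linearly independent, and the traversed displacements satisfy
`Δt₁•V₁ = Δt₂•V₂ + Δt₃•V₃`, then the proper times `Δtᵢ / G(‖Vᵢ‖)` coincide. -/
theorem distance_invariance_implies_proper_time_invariance
    (C : ℝ) (hC : 0 < C) (G : ℝ → ℝ)
    (hGcont : ContinuousOn G (Set.Ico 0 C))
    (hGmono : StrictMonoOn G (Set.Ico 0 C))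
    (hG0 : G 0 = 1)
    (hGtop : Filter.Tendsto G (nhdsWithin C (Set.Iio C)) Filter.atTop)
    (V₁ V₂ V₃ : EuclideanSpace ℝ (Fin 3))
    (h₁ : ‖V₁‖ < C) (h₂ : ‖V₂‖ < C) (h₃ : ‖V₃‖ < C)
    (hadd : G ‖V₁‖ • V₁ = G ‖V₂‖ • V₂ + G ‖V₃‖ • V₃)
    (hli : LinearIndependent ℝ ![V₂, V₃])
    (Δt₁ Δt₂ Δt₃ : ℝ) (ht₁ : 0 < Δt₁) (ht₂ : 0 < Δt₂) (ht₃ : 0 < Δt₃)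
    (hdist : Δt₁ • V₁ = Δt₂ • V₂ + Δt₃ • V₃) :
    Δt₁ / G ‖V₁‖ = Δt₂ / G ‖V₂‖ ∧ Δt₂ / G ‖V₂‖ = Δt₃ / G ‖V₃‖ := by
  have hg : ∀ V : EuclideanSpace ℝ (Fin 3), ‖V‖ < C → 0 < G ‖V‖ := by
    intro V hV
    have := hGmono.monotoneOn ⟨le_refl 0, hC⟩ ⟨norm_nonneg V, hV⟩ (norm_nonneg V)
    linarith [hG0 ▸ this]
  have hg₁ := hg V₁ h₁
  have hg₂ := hg V₂ h₂
  have hg₃ := hg V₃ h₃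
  have key : (Δt₁ * G ‖V₂‖ - G ‖V₁‖ * Δt₂) • V₂ +
      (Δt₁ * G ‖V₃‖ - G ‖V₁‖ * Δt₃) • V₃ = 0 := by
    have e1 : Δt₁ • (G ‖V₂‖ • V₂ + G ‖V₃‖ • V₃) = G ‖V₁‖ • (Δt₂ • V₂ + Δt₃ • V₃) := by
      rw [← hadd, ← hdist, smul_comm]
    simp only [smul_add, smul_smul] at e1
    rw [sub_smul, sub_smul, sub_add_sub_comm, sub_eq_zero]
    exact e1
  obtain ⟨hz₂, hz₃⟩ := LinearIndependent.pair_iff.mp hli _ _ key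
  have q2 : Δt₂ / G ‖V₂‖ = Δt₁ / G ‖V₁‖ := by
    rw [div_eq_div_iff hg₂.ne' hg₁.ne']; linarith
  have q3 : Δt₃ / G ‖V₃‖ = Δt₁ / G ‖V₁‖ := by
    rw [div_eq_div_iff hg₃.ne' hg₁.ne']; linarith
  exact ⟨q2.symm, q2.trans q3.symm⟩
end
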